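/- For all 3×3 real skew-symmetric matrices Ω and Ω′, the matrix exponential satisfies ‖exp(Ω) − exp(Ω′)‖_F ≤ ‖Ω − Ω′‖_F; that is, exp is 1-Lipschitz on the space of 3×3 skew-symmetric matrices with respect to the Frobenius norm. -/

import Mathlib

/-!
Join the two exponentials by the path `s ↦ exp (s • Ω) * exp ((1 - s) • Ω')`. Its derivative is
`exp (s • Ω) * (Ω - Ω') * exp ((1 - s) • Ω')`, and both outer factors are orthogonal because the
exponential of a skew-symmetric matrix is. The Frobenius norm is invariant under multiplication by
orthogonal matrices on either side, so the derivative has norm `‖Ω - Ω'‖` throughout, and the mean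
value inequality on `[0, 1]` gives the bound.
-/

open scoped Matrix
open NormedSpace

section UnitarilyInvariantNorm

variable {𝔸 : Type*} [NormedRing 𝔸] [NormedAlgebra ℝ 𝔸] [CompleteSpace 𝔸]

theorem hasDerivAt_exp_smul_mul_exp_one_sub_smul (x y : 𝔸) (t : ℝ) :
    HasDerivAt (fun s : ℝ => exp (s • x) * exp ((1 - s) • y))
      (exp (t • x) * (x - y) * exp ((1 - t) • y)) t := by
  have hy : HasDerivAt (fun s : ℝ => exp ((1 - s) • y)) ((-1 : ℝ) • (y * exp ((1 - t) • y))) t :=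
    (hasDerivAt_exp_smul_const' y (1 - t)).scomp t ((hasDerivAt_id t).const_sub 1)
  refine ((hasDerivAt_exp_smul_const x t).mul hy).congr_deriv ?_
  rw [neg_one_smul]
  noncomm_ring

theorem norm_exp_sub_exp_le_of_norm_unitary_mul_mul [StarRing 𝔸] [ContinuousStar 𝔸]
    [StarModule ℝ 𝔸] (hnorm : ∀ u ∈ unitary 𝔸, ∀ v ∈ unitary 𝔸, ∀ a : 𝔸, ‖u * a * v‖ = ‖a‖)
    {x y : 𝔸} (hx : x ∈ skewAdjoint 𝔸) (hy : y ∈ skewAdjoint 𝔸) :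
    ‖exp x - exp y‖ ≤ ‖x - y‖ := by
  -- `exp_mem_unitary_of_mem_skewAdjoint` is stated over normed `ℚ`-algebras.
  let +nondep : NormedAlgebra ℚ 𝔸 := .restrictScalars ℚ ℝ 𝔸
  simpa using norm_image_sub_le_of_norm_deriv_le_segment_01'
    (fun t _ => (hasDerivAt_exp_smul_mul_exp_one_sub_smul x y t).hasDerivWithinAt)
    (fun t _ => (hnorm _ (exp_mem_unitary_of_mem_skewAdjoint (skewAdjoint.smul_mem t hx)) _
      (exp_mem_unitary_of_mem_skewAdjoint (skewAdjoint.smul_mem (1 - t) hy)) (x - y)).le)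

end UnitarilyInvariantNorm

namespace Matrix

attribute [local instance] frobeniusNormedAddCommGroup

variable {m n 𝕜 : Type*} [Fintype m] [Fintype n] [RCLike 𝕜]

theorem frobenius_norm_sq_eq_re_trace (A : Matrix m n 𝕜) :
    ‖A‖ ^ 2 = RCLike.re (Aᴴ * A).trace := by
  rw [frobenius_norm_def, ← Real.sqrt_eq_rpow, Real.sq_sqrt (by positivity), Finset.sum_comm]
  simp only [trace, diag, mul_apply, conjTranspose_apply, RCLike.star_def, RCLike.conj_mul,
    map_sum, Real.rpow_two, ← RCLike.ofReal_pow, RCLike.ofReal_re]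

theorem frobenius_norm_mem_unitary_mul [DecidableEq m] {U : Matrix m m 𝕜}
    (hU : U ∈ unitary (Matrix m m 𝕜)) (A : Matrix m n 𝕜) : ‖U * A‖ = ‖A‖ := by
  rw [← pow_left_inj₀ (norm_nonneg _) (norm_nonneg _) two_ne_zero,
    frobenius_norm_sq_eq_re_trace, frobenius_norm_sq_eq_re_trace, conjTranspose_mul,
    Matrix.mul_assoc, ← Matrix.mul_assoc Uᴴ, ← star_eq_conjTranspose,
    Unitary.star_mul_self_of_mem hU, Matrix.one_mul]

theorem frobenius_norm_mul_mem_unitary [DecidableEq n] (A : Matrix m n 𝕜) {U : Matrix n n 𝕜}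
    (hU : U ∈ unitary (Matrix n n 𝕜)) : ‖A * U‖ = ‖A‖ := by
  rw [← frobenius_norm_conjTranspose, conjTranspose_mul, ← star_eq_conjTranspose,
    frobenius_norm_mem_unitary_mul (Unitary.star_mem hU), frobenius_norm_conjTranspose]

attribute [local instance] frobeniusNormedRing frobeniusNormedAlgebra

theorem frobenius_norm_exp_sub_exp_le [DecidableEq n] {A B : Matrix n n 𝕜}
    (hA : A ∈ skewAdjoint (Matrix n n 𝕜)) (hB : B ∈ skewAdjoint (Matrix n n 𝕜)) :
    ‖exp A - exp B‖ ≤ ‖A - B‖ :=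
  norm_exp_sub_exp_le_of_norm_unitary_mul_mul
    (fun _ hu _ hv a => by
      rw [frobenius_norm_mul_mem_unitary _ hv, frobenius_norm_mem_unitary_mul hu])
    hA hB

end Matrix

attribute [local instance] Matrix.frobeniusNormedAddCommGroup Matrix.frobeniusNormedSpace

theorem stmt8 (Ω Ω' : Matrix (Fin 3) (Fin 3) ℝ) (hΩ : Ωᵀ = -Ω) (hΩ' : Ω'ᵀ = -Ω') :
    ‖exp Ω - exp Ω'‖ ≤ ‖Ω - Ω'‖ :=
  Matrix.frobenius_norm_exp_sub_exp_le (skewAdjoint.mem_iff.mpr hΩ)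
    (skewAdjoint.mem_iff.mpr hΩ')
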